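/- arXiv:math-ph/0410022 — 4 statements merged into one kernel-verified Lean document; each statement's English description precedes it below -/
import Mathlib

section
/- Let a : ℤ² × ℤ² → ℝ be an elliptic matrix for the square lattice graph, and let L be the associated elliptic operator on functions u : ℤ² → ℂ, i.e. (Lu)(v) = a(v,v)u(v) + ∑_{w ~ v} a(v,w)u(w). Then for every λ ∈ ℂ there is no nonzero finitely supported function u : ℤ² → ℂ with Lu = λu. (This is the case of the regular (4,4) tessellation, whose combinatorial curvature vanishes at every corner, in the paper's main theorem; it recovers the two-dimensional case of Delyon–Souillard.) -/
/-- The set of the four nearest-neighbour directions in the square lattice. -/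
def sqDirs : Finset (ℤ × ℤ) := {(1, 0), (-1, 0), (0, 1), (0, -1)}

/-- Adjacency in the square lattice graph: `v ~ w` iff `w - v` is a nearest-neighbour
direction. -/
def sqAdj (v w : ℤ × ℤ) : Prop := w - v ∈ sqDirs

/-- The elliptic operator on the square lattice associated to the matrix `a`:
`(L u)(v) = a(v,v) u(v) + ∑_{w ~ v} a(v,w) u(w)`. -/
noncomputable def sqL (a : (ℤ × ℤ) × (ℤ × ℤ) → ℝ) (u : ℤ × ℤ → ℂ) (v : ℤ × ℤ) : ℂ :=
  (a (v, v) : ℂ) * u v + ∑ d ∈ sqDirs, (a (v, v + d) : ℂ) * u (v + d)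

/-!
Order `ℤ²` lexicographically by `(x + y, x)` and let `v` be the largest point of the (finite,
nonempty) support of `u`. At `w = v + (1, 0)` the function `u` vanishes, and so it does at every
neighbour of `w` except `v`, since these all lie further along that order. The eigenvalue equation
at `w` thus collapses to `a(w, v) u(v) = 0`, contradicting `a(w, v) ≠ 0` and `u(v) ≠ 0`.
-/

open Function

theorem exists_ne_zero_forall_lt_eq_zero {α β M : Type*} [LinearOrder β] [Zero M]
    (f : α → β) {u : α → M} (hfin : (support u).Finite) (hu : u ≠ 0) :
    ∃ v, u v ≠ 0 ∧ ∀ p, f v < f p → u p = 0 := by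
  obtain ⟨v, hv, hmax⟩ := Set.exists_max_image _ f hfin (support_nonempty_iff.mpr hu)
  exact ⟨v, hv, fun p hlt => not_ne_iff.mp fun hp => (hmax p hp).not_gt hlt⟩

theorem sqL_eq_of_forall_ne_eq_zero {a : (ℤ × ℤ) × (ℤ × ℤ) → ℝ} {u : ℤ × ℤ → ℂ}
    {w d : ℤ × ℤ} (hd : d ∈ sqDirs) (hw : u w = 0)
    (hoff : ∀ e ∈ sqDirs, e ≠ d → u (w + e) = 0) :
    sqL a u w = a (w, w + d) * u (w + d) := by
  rw [sqL, hw, mul_zero, zero_add]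
  exact Finset.sum_eq_single_of_mem d hd fun e he hne => by rw [hoff e he hne, mul_zero]

theorem eq_zero_around_of_forall_diagLex_lt_eq_zero {M : Type*} [Zero M] {u : ℤ × ℤ → M}
    {v : ℤ × ℤ} (hmax : ∀ p : ℤ × ℤ, toLex (v.1 + v.2, v.1) < toLex (p.1 + p.2, p.1) → u p = 0) :
    u (v + (1, 0)) = 0 ∧ ∀ e ∈ sqDirs, e ≠ (-1, 0) → u (v + (1, 0) + e) = 0 := by
  refine ⟨hmax _ (Prod.Lex.toLex_strictMono (by simp)), fun e he hne => hmax _ ?_⟩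
  simp only [sqDirs, Finset.mem_insert, Finset.mem_singleton] at he
  rcases he with rfl | rfl | rfl | rfl
  all_goals first
    | exact absurd rfl hne
    | simp only [Prod.fst_add, Prod.snd_add, Prod.Lex.toLex_lt_toLex]; omega

theorem square_lattice_no_compactly_supported_eigenfunction_general
    (a : (ℤ × ℤ) × (ℤ × ℤ) → ℝ)
    (hell₁ : ∀ v w, sqAdj v w → a (v, w) ≠ 0)
    (lam : ℂ) :
    ¬ ∃ u : ℤ × ℤ → ℂ, u ≠ 0 ∧ (Function.support u).Finite ∧
      ∀ v, sqL a u v = lam * u v := by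
  rintro ⟨u, hu, hfin, heq⟩
  obtain ⟨v, hv, hmax⟩ :=
    exists_ne_zero_forall_lt_eq_zero (fun p : ℤ × ℤ => toLex (p.1 + p.2, p.1)) hfin hu
  obtain ⟨hw, hoff⟩ := eq_zero_around_of_forall_diagLex_lt_eq_zero hmax
  have hback : v + (1, 0) + (-1, 0) = v := by ext <;> simp
  have hadj : sqAdj (v + (1, 0)) v := by
    rw [sqAdj, show v - (v + (1, 0)) = (-1, 0) by ext <;> simp]
    decide
  have hEq := heq (v + (1, 0))
  rw [sqL_eq_of_forall_ne_eq_zero (by decide) hw hoff, hw, mul_zero, hback] at hEq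
  exact hv ((mul_eq_zero.mp hEq).resolve_left (by exact_mod_cast hell₁ _ _ hadj))

/-- No elliptic operator on the square lattice (the regular (4,4) tessellation) admits a
nonzero finitely supported eigenfunction. -/
theorem square_lattice_no_compactly_supported_eigenfunction
    (a : (ℤ × ℤ) × (ℤ × ℤ) → ℝ)
    (hell₁ : ∀ v w, sqAdj v w → a (v, w) ≠ 0)
    (hell₂ : ∀ v w, v ≠ w → ¬ sqAdj v w → a (v, w) = 0)
    (lam : ℂ) :
    ¬ ∃ u : ℤ × ℤ → ℂ, u ≠ 0 ∧ (Function.support u).Finite ∧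
      ∀ v, sqL a u v = lam * u v :=
  square_lattice_no_compactly_supported_eigenfunction_general a hell₁ lam
end

section
/- Let a be an elliptic matrix for the hexagonal (honeycomb) lattice graph, and let L be the associated elliptic operator on functions u from the vertex set ℤ² × {0,1} to ℂ. Then for every λ ∈ ℂ there is no nonzero finitely supported function u with Lu = λu. (This is the case of the regular (6,3) tessellation, whose combinatorial curvature vanishes at every corner, in the paper's main theorem.) -/
/-- Vertices of the hexagonal (honeycomb) lattice: `ℤ² × {0,1}`, where the Boolean
records the sublattice (`false` for `0`, `true` for `1`). -/
abbrev HexVertex : Type := (ℤ × ℤ) × Bool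

/-- The displacement set for honeycomb adjacency. -/
def hexDirs : Finset (ℤ × ℤ) := {(0, 0), (1, 0), (0, 1)}

/-- The three neighbours of a vertex in the honeycomb lattice: `(p, 0)` is adjacent to
`(q, 1)` iff `q - p ∈ {(0,0), (1,0), (0,1)}`, and no two vertices with the same second
coordinate are adjacent. -/
def hexNbrs (v : HexVertex) : Finset HexVertex :=
  hexDirs.image (fun d => if v.2 then (v.1 - d, false) else (v.1 + d, true))

/-- Adjacency in the honeycomb lattice graph. -/
def hexAdj (v w : HexVertex) : Prop := w ∈ hexNbrs v

/-- The elliptic operator on the honeycomb lattice associated to the matrix `a`: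
`(L u)(v) = a(v,v) u(v) + ∑_{w ~ v} a(v,w) u(w)`. -/
noncomputable def hexL (a : HexVertex × HexVertex → ℝ) (u : HexVertex → ℂ)
    (v : HexVertex) : ℂ :=
  (a (v, v) : ℂ) * u v + ∑ w ∈ hexNbrs v, (a (v, w) : ℂ) * u w

/-!
Give the vertex `((x, y), b)` the height `2x + y - b`. Every vertex `v` has a neighbour
`hexSucc v` which, together with all of its neighbours other than `v`, lies strictly higher
than `v`. At a highest point `v` of the support of an eigenfunction `u`, the eigenvalue
equation at `hexSucc v` therefore collapses to `a (hexSucc v, v) * u v = 0`, and ellipticity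
forces `u v = 0`.
-/

lemma hexL_eq_of_eq_zero_off_nbr {a : HexVertex × HexVertex → ℝ} {u : HexVertex → ℂ}
    {v w : HexVertex} (hv : v ∈ hexNbrs w) (hw : u w = 0)
    (hnbrs : ∀ v' ∈ hexNbrs w, v' ≠ v → u v' = 0) :
    hexL a u w = a (w, v) * u v := by
  rw [hexL, hw, mul_zero, zero_add]
  exact Finset.sum_eq_single_of_mem v hv fun v' hv' hne => by rw [hnbrs v' hv' hne, mul_zero]

def hexHeight (v : HexVertex) : ℤ := 2 * v.1.1 + v.1.2 - if v.2 then 1 else 0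

def hexSucc (v : HexVertex) : HexVertex := if v.2 then (v.1, false) else (v.1 + (1, 0), true)

lemma mem_hexNbrs_hexSucc (v : HexVertex) : v ∈ hexNbrs (hexSucc v) := by
  obtain ⟨p, _ | _⟩ := v <;> simp [hexSucc, hexNbrs, hexDirs]

lemma hexHeight_lt_hexSucc (v : HexVertex) : hexHeight v < hexHeight (hexSucc v) := by
  obtain ⟨p, _ | _⟩ := v <;> simp [hexSucc, hexHeight]
  omega

lemma hexHeight_lt_of_mem_hexNbrs_hexSucc {v w : HexVertex} (hw : w ∈ hexNbrs (hexSucc v))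
    (hne : w ≠ v) : hexHeight v < hexHeight w := by
  obtain ⟨⟨x, y⟩, _ | _⟩ := v <;>
    simp [hexSucc, hexNbrs, hexDirs, hexHeight] at hw hne ⊢ <;>
    rcases hw with rfl | rfl | rfl <;> simp_all; omega

lemma eq_zero_of_forall_hexHeight_lt {a : HexVertex × HexVertex → ℝ} {u : HexVertex → ℂ}
    {lam : ℂ} (heig : ∀ v, hexL a u v = lam * u v) {v : HexVertex}
    (ha : a (hexSucc v, v) ≠ 0) (hhigher : ∀ w, hexHeight v < hexHeight w → u w = 0) :
    u v = 0 := by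
  have hsucc := hhigher _ (hexHeight_lt_hexSucc v)
  have h := heig (hexSucc v)
  rw [hexL_eq_of_eq_zero_off_nbr (mem_hexNbrs_hexSucc v) hsucc
    fun w hw hne => hhigher w (hexHeight_lt_of_mem_hexNbrs_hexSucc hw hne), hsucc, mul_zero] at h
  exact (mul_eq_zero.1 h).resolve_left (Complex.ofReal_ne_zero.2 ha)

theorem hexagonal_lattice_no_compactly_supported_eigenfunction_general
    (a : HexVertex × HexVertex → ℝ)
    (hell₁ : ∀ v w, hexAdj v w → a (v, w) ≠ 0)
    (lam : ℂ) :
    ¬ ∃ u : HexVertex → ℂ, u ≠ 0 ∧ (Function.support u).Finite ∧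
      ∀ v, hexL a u v = lam * u v := by
  rintro ⟨u, hu, hfin, heig⟩
  obtain ⟨v, hv, hvmax⟩ := hfin.toFinset.exists_max_image hexHeight <| by
    simpa [Finset.nonempty_iff_ne_empty] using hu
  rw [Set.Finite.mem_toFinset] at hv
  refine hv (eq_zero_of_forall_hexHeight_lt heig (hell₁ _ _ (mem_hexNbrs_hexSucc v)) ?_)
  intro w hw
  by_contra hw'
  exact (hvmax w (hfin.mem_toFinset.2 hw')).not_gt hw

/-- No elliptic operator on the hexagonal lattice (the regular (6,3) tessellation) admits
a nonzero finitely supported eigenfunction. -/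
theorem hexagonal_lattice_no_compactly_supported_eigenfunction
    (a : HexVertex × HexVertex → ℝ)
    (hell₁ : ∀ v w, hexAdj v w → a (v, w) ≠ 0)
    (hell₂ : ∀ v w, v ≠ w → ¬ hexAdj v w → a (v, w) = 0)
    (lam : ℂ) :
    ¬ ∃ u : HexVertex → ℂ, u ≠ 0 ∧ (Function.support u).Finite ∧
      ∀ v, hexL a u v = lam * u v :=
  hexagonal_lattice_no_compactly_supported_eigenfunction_general a hell₁ lam
end

section
/- For every potential V : ℤ² → ℝ and every λ ∈ ℂ, the discrete Schrödinger operator H on the square lattice, defined by (Hu)(v) = ∑_{w ~ v} u(w) + V(v)u(v) where the sum runs over the four nearest neighbours of v, admits no nonzero finitely supported eigenfunction: there is no nonzero finitely supported u : ℤ² → ℂ with Hu = λu. (Special case of the paper's main theorem; this is Delyon–Souillard's result on the two-dimensional lattice.) -/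
/-- The discrete Schrödinger operator on the square lattice with potential `V`:
`(H u)(v) = ∑_{w ~ v} u(w) + V(v) u(v)`. -/
noncomputable def schrodinger (V : ℤ × ℤ → ℝ) (u : ℤ × ℤ → ℂ) (v : ℤ × ℤ) : ℂ :=
  (∑ d ∈ sqDirs, u (v + d)) + (V v : ℂ) * u v

/-! Order the support of `u` by `x + y`, breaking ties by `x`, and let `v` be its largest point.
At `v + (1, 0)` the point itself and its neighbours other than `v` all lie strictly above `v`,
so the eigenvalue equation there collapses to `u v = 0`. -/

lemma sum_sqDirs {M : Type*} [AddCommMonoid M] (f : ℤ × ℤ → M) :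
    ∑ d ∈ sqDirs, f d = f (1, 0) + f (-1, 0) + f (0, 1) + f (0, -1) := by
  simp [sqDirs, add_assoc]

lemma exists_apply_ne_zero_forall_lt_imp_eq_zero {α β M : Type*} [LinearOrder β] [Zero M]
    {u : α → M} (hu : u ≠ 0) (hfin : (Function.support u).Finite) (f : α → β) :
    ∃ v, u v ≠ 0 ∧ ∀ w, f v < f w → u w = 0 := by
  obtain ⟨v, hv, hmax⟩ := Set.exists_max_image _ f hfin (Function.support_nonempty_iff.mpr hu)
  exact ⟨v, hv, fun w hlt => by_contra fun hw => (hmax w hw).not_gt hlt⟩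

def diagLex (v : ℤ × ℤ) : ℤ ×ₗ ℤ := toLex (v.1 + v.2, v.1)

lemma diagLex_lt_add {v d : ℤ × ℤ} (hd : 0 < d.1 + d.2 ∨ d.1 + d.2 = 0 ∧ 0 < d.1) :
    diagLex v < diagLex (v + d) := by
  simp only [diagLex, Prod.Lex.toLex_lt_toLex, Prod.fst_add, Prod.snd_add]
  omega

lemma schrodinger_add_one_zero_eq_of_vanishing_above {V : ℤ × ℤ → ℝ} {u : ℤ × ℤ → ℂ} {v : ℤ × ℤ}
    (hz : ∀ w, diagLex v < diagLex w → u w = 0) :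
    schrodinger V u (v + (1, 0)) = u v ∧ u (v + (1, 0)) = 0 := by
  have above (d : ℤ × ℤ) (hd : 0 < d.1 + d.2 ∨ d.1 + d.2 = 0 ∧ 0 < d.1) : u (v + d) = 0 :=
    hz _ (diagLex_lt_add hd)
  have shift (d : ℤ × ℤ) : v + (1, 0) + d = v + ((1, 0) + d) := add_assoc _ _ _
  have back : v + (1, 0) + (-1, 0) = v := by ext <;> simp
  refine ⟨?_, above (1, 0) (by norm_num)⟩
  rw [schrodinger, sum_sqDirs, back]
  simp only [shift, Prod.mk_add_mk]
  rw [above (1, 0) (by norm_num), above (1 + 1, 0 + 0) (by norm_num),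
    above (1 + 0, 0 + 1) (by norm_num), above (1 + 0, 0 + -1) (by norm_num)]
  simp

/-- Delyon–Souillard in two dimensions: the discrete Schrödinger operator on the square
lattice admits no nonzero finitely supported eigenfunction. -/
theorem schrodinger_square_lattice_no_compactly_supported_eigenfunction
    (V : ℤ × ℤ → ℝ) (lam : ℂ) :
    ¬ ∃ u : ℤ × ℤ → ℂ, u ≠ 0 ∧ (Function.support u).Finite ∧
      ∀ v, schrodinger V u v = lam * u v := by
  rintro ⟨u, hu, hfin, heig⟩
  obtain ⟨v, hv, hz⟩ := exists_apply_ne_zero_forall_lt_imp_eq_zero hu hfin diagLex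
  obtain ⟨hHv, hzero⟩ := schrodinger_add_one_zero_eq_of_vanishing_above (V := V) hz
  apply hv
  calc u v = schrodinger V u (v + (1, 0)) := hHv.symm
    _ = lam * u (v + (1, 0)) := heig _
    _ = 0 := by rw [hzero, mul_zero]
end

section
/- Let G be a locally finite graph with vertex set V, let a : V × V → ℝ be an elliptic matrix, L the associated elliptic operator, λ ∈ ℂ, and u : V → ℂ a function with Lu = λu. Suppose v is a vertex with u(v) = 0 and w is a neighbour of v such that u vanishes at every neighbour of v other than w. Then u(w) = 0. (This propagation step, resting on ellipticity, is the algebraic core of the paper's Lemmas 4.1 and 4.3.) -/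
theorem SimpleGraph.sum_neighborFinset_eq_single {V M : Type*} [AddCommMonoid M]
    (G : SimpleGraph V) [G.LocallyFinite] {v w : V} (hvw : G.Adj v w) (f : V → M)
    (hf : ∀ x, G.Adj v x → x ≠ w → f x = 0) :
    ∑ x ∈ G.neighborFinset v, f x = f w :=
  Finset.sum_eq_single_of_mem w ((G.mem_neighborFinset v w).mpr hvw)
    fun x hx hxw => hf x ((G.mem_neighborFinset v x).mp hx) hxw

theorem elliptic_propagation_general {V : Type*} (G : SimpleGraph V) [G.LocallyFinite]
    (a : V × V → ℝ)
    (hell₁ : ∀ v w, G.Adj v w → a (v, w) ≠ 0)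
    (u : V → ℂ) (lam : ℂ)
    (heigen : ∀ v, (a (v, v) : ℂ) * u v + ∑ w ∈ G.neighborFinset v, (a (v, w) : ℂ) * u w
      = lam * u v)
    (v w : V) (hv : u v = 0) (hvw : G.Adj v w)
    (hother : ∀ x, G.Adj v x → x ≠ w → u x = 0) :
    u w = 0 := by
  have hsum : ∑ x ∈ G.neighborFinset v, (a (v, x) : ℂ) * u x = (a (v, w) : ℂ) * u w :=
    G.sum_neighborFinset_eq_single hvw _ fun x hx hxw => by rw [hother x hx hxw, mul_zero]
  have hterm : (a (v, w) : ℂ) * u w = 0 := by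
    simpa only [hv, mul_zero, zero_add, hsum] using heigen v
  have haw : (a (v, w) : ℂ) ≠ 0 := Complex.ofReal_ne_zero.mpr (hell₁ v w hvw)
  exact (mul_eq_zero.mp hterm).resolve_left haw

/-- Propagation step for elliptic operators on locally finite graphs: if `Lu = λu`,
`u(v) = 0`, `w` is a neighbour of `v`, and `u` vanishes at every neighbour of `v`
other than `w`, then `u(w) = 0`. -/
theorem elliptic_propagation {V : Type*} (G : SimpleGraph V) [G.LocallyFinite]
    (a : V × V → ℝ)
    (hell₁ : ∀ v w, G.Adj v w → a (v, w) ≠ 0)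
    (hell₂ : ∀ v w, v ≠ w → ¬ G.Adj v w → a (v, w) = 0)
    (u : V → ℂ) (lam : ℂ)
    (heigen : ∀ v, (a (v, v) : ℂ) * u v + ∑ w ∈ G.neighborFinset v, (a (v, w) : ℂ) * u w
      = lam * u v)
    (v w : V) (hv : u v = 0) (hvw : G.Adj v w)
    (hother : ∀ x, G.Adj v x → x ≠ w → u x = 0) :
    u w = 0 :=
  elliptic_propagation_general G a hell₁ u lam heigen v w hv hvw hother
end
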